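/- arXiv:1701.00501 — 2 statements merged into one kernel-verified Lean document; each statement's English description precedes it below -/
import Mathlib

section
/- For real a > 0, b, and c, the complex Laplace transform ∫₀^∞ e^{−k(a − i c)} J₀(b k) dk = 1/√(b² + (a − i c)²), where the square root is the principal branch; this is the closed form of the X-wave solution Φ_X(t,x) = a₀/√((ρ sinη)² + (a₀ − i(z cosη − t))²) obtained from its Bessel integral representation. -/
/-! Writing `J₀(bk)` as its angular integral and integrating in `k` first (Fubini, with the bound
`|e^{-k(s - i b cos θ)}| = e^{-k Re s}`) reduces the claim, for `s = a - ic`, to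
`∫₀^{2π} (s - i b cos θ)⁻¹ dθ = 2π / r` with `r = √(s² + b²)`. Substituting `z = e^{iθ}` turns this
into a contour integral of `1 / ((z - z₁)(b/2)(z - z₂))` over the unit circle, where `z₁ z₂ = 1` and
`|z₁| < |z₂|` because both `r` and `s` have positive real part; Cauchy's formula at `z₁` gives
`2π / r`. -/

open MeasureTheory Complex

/-- The Bessel function of the first kind of order zero,
`J₀(x) = (1/2π) ∫₀^{2π} e^{i x cos θ} dθ`. -/
noncomputable def besselJ0 (x : ℝ) : ℂ :=
  (1 / (2 * Real.pi) : ℝ) • ∫ θ in (0:ℝ)..(2 * Real.pi),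
    Complex.exp (Complex.I * (x : ℂ) * (Real.cos θ : ℂ))

namespace Complex

lemma re_cpow_inv_two_pos {w : ℂ} (hw : w ∈ slitPlane) : 0 < (w ^ (2⁻¹ : ℂ)).re := by
  rw [cpow_inv_two_re, Real.sqrt_pos]
  rcases mem_slitPlane_iff.1 hw with hre | him
  · linarith [norm_nonneg w]
  · linarith [abs_re_lt_norm.2 him, neg_abs_le w.re]

lemma sq_add_ofReal_sq_mem_slitPlane {s : ℂ} (hs : 0 < s.re) (b : ℝ) :
    s ^ 2 + (b : ℂ) ^ 2 ∈ slitPlane := by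
  rw [mem_slitPlane_iff]
  by_cases him : s.im = 0
  · left
    simpa [sq, him] using add_pos_of_pos_of_nonneg (mul_pos hs hs) (mul_self_nonneg b)
  · right
    simpa [sq, mul_comm s.im] using mul_ne_zero (mul_ne_zero two_ne_zero hs.ne') him

lemma norm_sub_lt_norm_add_of_sq_im_eq {r s : ℂ} (hr : 0 < r.re) (hs : 0 < s.re)
    (h : (r ^ 2).im = (s ^ 2).im) : ‖r - s‖ < ‖r + s‖ := by
  simp only [sq, mul_im] at h
  have hpos : 0 < r.re * s.re + r.im * s.im := by
    refine pos_of_mul_pos_right (a := r.re) ?_ hr.le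
    have key : r.re * (r.re * s.re + r.im * s.im) = s.re * (r.re ^ 2 + s.im ^ 2) := by
      linear_combination s.im * h / 2
    rw [key]
    positivity
  rw [← sq_lt_sq₀ (norm_nonneg _) (norm_nonneg _), Complex.sq_norm, Complex.sq_norm,
    normSq_apply, normSq_apply]
  simp only [sub_re, sub_im, add_re, add_im]
  nlinarith

end Complex

lemma integral_comp_circleMap {E : Type*} [NormedAddCommGroup E] [NormedSpace ℂ E] (c : ℂ)
    {R : ℝ} (hR : R ≠ 0) (f : ℂ → E) :
    ∫ θ in (0:ℝ)..2 * Real.pi, f (circleMap c R θ) = ∮ z in C(c, R), ((z - c) * I)⁻¹ • f z := by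
  refine intervalIntegral.integral_congr fun θ _ => ?_
  simp only [deriv_circleMap, circleMap_sub_center, smul_smul]
  rw [mul_inv_cancel₀ (mul_ne_zero (circleMap_ne_center hR) I_ne_zero), one_smul]

lemma ofReal_cos_eq_circleMap (θ : ℝ) :
    (Real.cos θ : ℂ) = (circleMap 0 1 θ + (circleMap 0 1 θ)⁻¹) / 2 := by
  simp [circleMap, ofReal_cos, cos, ← exp_neg]

lemma integral_inv_sub_I_mul_cos_of_ne_zero {s r : ℂ} {b : ℝ} (hb : b ≠ 0) (hs : 0 < s.re)
    (hr : 0 < r.re) (hrs : r ^ 2 = s ^ 2 + (b : ℂ) ^ 2) :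
    ∫ θ in (0:ℝ)..2 * Real.pi, (s - I * b * Real.cos θ)⁻¹ = 2 * Real.pi / r := by
  have hb' : (b : ℂ) ≠ 0 := ofReal_ne_zero.2 hb
  -- the roots of `z i (s - i b (z + z⁻¹) / 2) = (b / 2) z² + i s z + b / 2`
  set z₁ := I * (r - s) / b
  set z₂ := -I * (r + s) / b
  have hsum : (b : ℂ) * (z₁ + z₂) = -2 * I * s := by
    simp only [z₁, z₂]
    field_simp
    ring
  have hmul : z₁ * z₂ = 1 := by
    simp only [z₁, z₂]
    field_simp
    linear_combination (-(r ^ 2 - s ^ 2)) * I_sq + hrs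
  have hprod : ‖z₁‖ * ‖z₂‖ = 1 := by rw [← norm_mul, hmul, norm_one]
  have hlt : ‖z₁‖ < ‖z₂‖ := by
    have := norm_sub_lt_norm_add_of_sq_im_eq hr hs (by simp [hrs, sq])
    simp only [z₁, z₂, norm_div, norm_mul, norm_neg, norm_I, one_mul]
    gcongr
  have h₁ : ‖z₁‖ < 1 := by nlinarith [norm_nonneg z₁]
  have h₂ : 1 < ‖z₂‖ := by nlinarith [norm_nonneg z₁]
  have hfactor : ∀ z : ℂ, z ≠ 0 →
      z * I * (s - I * b * ((z + z⁻¹) / 2)) = (z - z₁) * (b / 2 * (z - z₂)) := by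
    intro z hz
    field_simp
    linear_combination (-b * (z ^ 2 + 1)) * I_sq + z * hsum - b * hmul
  have hz₂ : ∀ z ∈ Metric.closedBall (0 : ℂ) 1, b / 2 * (z - z₂) ≠ 0 := by
    intro z hz
    refine mul_ne_zero (by simpa using hb') (sub_ne_zero.2 ?_)
    rintro rfl
    simp at hz
    linarith
  calc ∫ θ in (0:ℝ)..2 * Real.pi, (s - I * b * Real.cos θ)⁻¹
      = ∮ z in C(0, 1), (z * I)⁻¹ • (s - I * b * ((z + z⁻¹) / 2))⁻¹ := by
        have := integral_comp_circleMap 0 one_ne_zero fun z => (s - I * b * ((z + z⁻¹) / 2))⁻¹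
        simp only [sub_zero] at this
        simp_rw [ofReal_cos_eq_circleMap]
        exact this
    _ = ∮ z in C(0, 1), (z - z₁)⁻¹ • (b / 2 * (z - z₂))⁻¹ := by
        refine circleIntegral.integral_congr zero_le_one fun z hz => ?_
        have hz0 : z ≠ 0 := by rintro rfl; simp at hz
        simp only [smul_eq_mul, ← mul_inv, hfactor z hz0]
    _ = (2 * Real.pi * I : ℂ) • (b / 2 * (z₁ - z₂))⁻¹ :=
        DifferentiableOn.circleIntegral_sub_inv_smul
          (((differentiable_id.sub_const z₂).const_mul _).differentiableOn.inv hz₂)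
          (by simpa using h₁)
    _ = 2 * Real.pi / r := by
        have hr0 : r ≠ 0 := by rintro rfl; simp at hr
        have hdiff : b / 2 * (z₁ - z₂) = I * r := by
          simp only [z₁, z₂]
          field_simp
          ring
        rw [hdiff, smul_eq_mul]
        field_simp

lemma integral_inv_sub_I_mul_cos {s r : ℂ} (b : ℝ) (hs : 0 < s.re) (hr : 0 < r.re)
    (hrs : r ^ 2 = s ^ 2 + (b : ℂ) ^ 2) :
    ∫ θ in (0:ℝ)..2 * Real.pi, (s - I * b * Real.cos θ)⁻¹ = 2 * Real.pi / r := by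
  rcases eq_or_ne b 0 with rfl | hb
  · obtain rfl : r = s := by
      rcases sq_eq_sq_iff_eq_or_eq_neg.1 (by simpa using hrs) with h | h
      · exact h
      · rw [h, neg_re] at hr
        linarith
    simp [div_eq_mul_inv]
  · exact integral_inv_sub_I_mul_cos_of_ne_zero hb hs hr hrs

lemma integral_Ioi_cexp_neg_mul {w : ℂ} (hw : 0 < w.re) :
    ∫ k in Set.Ioi (0:ℝ), cexp (-k * w) = w⁻¹ := by
  simpa [mul_comm, neg_div] using integral_exp_mul_complex_Ioi (a := -w) (by simpa) 0

lemma integrable_cexp_neg_mul_sub_I_mul_cos {s : ℂ} (hs : 0 < s.re) (b : ℝ) {ν : Measure ℝ}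
    [IsFiniteMeasure ν] :
    Integrable (Function.uncurry fun (k θ : ℝ) => cexp (-k * (s - I * b * Real.cos θ)))
      ((volume.restrict (Set.Ioi 0)).prod ν) := by
  refine Integrable.mono' ((exp_neg_integrableOn_Ioi 0 hs).mul_prod (integrable_const 1))
    (by fun_prop) (ae_of_all _ fun p => ?_)
  simp [Function.uncurry, norm_exp, mul_comm]

lemma cexp_neg_mul_mul_besselJ0 (s : ℂ) (b k : ℝ) :
    cexp (-k * s) * besselJ0 (b * k)
      = (1 / (2 * Real.pi) : ℝ) •
          ∫ θ in (0:ℝ)..2 * Real.pi, cexp (-k * (s - I * b * Real.cos θ)) := by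
  rw [besselJ0, mul_smul_comm, ← intervalIntegral.integral_const_mul]
  congr 1
  refine intervalIntegral.integral_congr fun θ _ => ?_
  rw [← exp_add]
  push_cast
  ring_nf

lemma integral_Ioi_cexp_neg_mul_mul_besselJ0 {s : ℂ} (hs : 0 < s.re) (b : ℝ) :
    ∫ k in Set.Ioi (0:ℝ), cexp (-k * s) * besselJ0 (b * k)
      = (1 / (2 * Real.pi) : ℝ) • ∫ θ in (0:ℝ)..2 * Real.pi, (s - I * b * Real.cos θ)⁻¹ := by
  simp_rw [cexp_neg_mul_mul_besselJ0, intervalIntegral.integral_of_le Real.two_pi_pos.le,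
    integral_smul]
  rw [integral_integral_swap (integrable_cexp_neg_mul_sub_I_mul_cos hs b)]
  congr 1
  refine setIntegral_congr_fun measurableSet_Ioc fun θ _ => ?_
  exact integral_Ioi_cexp_neg_mul (by simpa using hs)

/-- Complex Laplace transform of `J₀`: for real `a > 0`, `b`, `c`,
`∫₀^∞ e^{−k(a − ic)} J₀(bk) dk = 1/√(b² + (a − ic)²)` (principal branch);
this is the closed form of the X-wave `Φ_X` from its Bessel integral
representation. -/
theorem complex_laplace_besselJ0 (a b c : ℝ) (ha : 0 < a) :
    ∫ k in Set.Ioi (0:ℝ),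
        Complex.exp (-(k : ℂ) * ((a : ℂ) - (c : ℂ) * Complex.I)) * besselJ0 (b * k)
      = 1 / (((b : ℂ)^2 + ((a : ℂ) - (c : ℂ) * Complex.I)^2) ^ ((1:ℂ)/2)) := by
  set s : ℂ := a - c * I
  have hs : 0 < s.re := by simpa [s] using ha
  have hr := re_cpow_inv_two_pos (sq_add_ofReal_sq_mem_slitPlane hs b)
  rw [integral_Ioi_cexp_neg_mul_mul_besselJ0 hs,
    integral_inv_sub_I_mul_cos b hs hr (cpow_ofNat_inv_pow _ 2), ← one_div (2 : ℂ), add_comm]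
  have hr0 : (s ^ 2 + (b : ℂ) ^ 2) ^ (2⁻¹ : ℂ) ≠ 0 := fun h => by simp [h] at hr
  rw [real_smul]
  push_cast
  field_simp
end

section
/- The focus-wave-mode function Φ(t,ρ,z) = e^{iβ(z+t)} · exp(−ρ²β/(z₀ + i(z − t))) / (z₀ + i(z − t)), with parameters β > 0 and z₀ > 0, satisfies the homogeneous wave equation ∂ₜ²Φ = ∂ρ²Φ + (1/ρ)∂ρΦ + ∂z²Φ for all t ∈ ℝ, ρ > 0, z ∈ ℝ. -/
noncomputable section
open Complex

/-- Brittingham's focus wave mode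
`Φ(t,ρ,z) = e^{iβ(z+t)} exp(−ρ²β/(z₀ + i(z−t)))/(z₀ + i(z−t))`. -/
def fwm (β z₀ t ρ z : ℝ) : ℂ :=
  Complex.exp (Complex.I * (β : ℂ) * ((z + t : ℝ) : ℂ)) *
    Complex.exp (-(((ρ^2 * β : ℝ) : ℂ) / ((z₀ : ℂ) + Complex.I * ((z - t : ℝ) : ℂ)))) /
    ((z₀ : ℂ) + Complex.I * ((z - t : ℝ) : ℂ))

/-!
Write `Φ = e^{iβ(z+t)} ψ(w)` with `w = z₀ + i(z−t)` and `ψ(w) = exp(−ρ²β/w)/w`, which is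
holomorphic on `w ≠ 0`. Since `∂ₜw = −i` and `∂_z w = i`, the terms in `ψ` and `ψ''` cancel in
`∂ₜ²Φ − ∂_z²Φ`, leaving `4β e^{iβ(z+t)} ψ'(w)`. In `ρ`, `Φ` is a Gaussian `exp(−aρ²)` with
`a = β/w`, whose radial Laplacian is `4a(aρ² − 1) exp(−aρ²)`; computing `ψ'` shows that this is
the same quantity. So the wave equation reduces to the paraxial equation `Δ⊥ψ = 4β ∂_w ψ`,
which this Gaussian beam solves.
-/

namespace FocusWaveMode

theorem hasDerivAt_comp_ofReal_affine {φ : ℂ → ℂ} {φ' w b : ℂ} {x s : ℝ}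
    (h : HasDerivAt φ φ' (w + b * (s - x))) :
    HasDerivAt (fun s : ℝ => φ (w + b * (s - x))) (b * φ') s := by
  have hlin : HasDerivAt (fun y : ℂ => w + b * (y - x)) b s := by
    simpa using (((hasDerivAt_id (s : ℂ)).sub_const (x : ℂ)).const_mul b).const_add w
  simpa [mul_comm] using (h.comp (s : ℂ) hlin).comp_ofReal

theorem iteratedDeriv_two_exp_mul_comp_affine {ψ : ℂ → ℂ} {U : Set ℂ} (hU : IsOpen U)
    (hψ : DifferentiableOn ℂ ψ U) (c₀ c w b : ℂ) (x : ℝ)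
    (hwU : ∀ s : ℝ, w + b * (s - x) ∈ U) :
    iteratedDeriv 2 (fun s : ℝ => exp (c₀ + c * (s - x)) * ψ (w + b * (s - x))) x
      = exp c₀ * (c ^ 2 * ψ w + 2 * c * b * deriv ψ w + b ^ 2 * deriv (deriv ψ) w) := by
  have hψ' : ∀ s : ℝ, HasDerivAt (fun s : ℝ => ψ (w + b * (s - x)))
      (b * deriv ψ (w + b * (s - x))) s :=
    fun s => hasDerivAt_comp_ofReal_affine ((hψ.differentiableAt (hU.mem_nhds (hwU s))).hasDerivAt)
  have hψ'' : ∀ s : ℝ, HasDerivAt (fun s : ℝ => deriv ψ (w + b * (s - x)))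
      (b * deriv (deriv ψ) (w + b * (s - x))) s :=
    fun s => hasDerivAt_comp_ofReal_affine
      (((hψ.deriv hU).differentiableAt (hU.mem_nhds (hwU s))).hasDerivAt)
  have hexp : ∀ s : ℝ, HasDerivAt (fun s : ℝ => exp (c₀ + c * (s - x)))
      (c * exp (c₀ + c * (s - x))) s :=
    fun s => hasDerivAt_comp_ofReal_affine (Complex.hasDerivAt_exp _)
  have hfirst : deriv (fun s : ℝ => exp (c₀ + c * (s - x)) * ψ (w + b * (s - x)))
      = fun s : ℝ =>
        exp (c₀ + c * (s - x)) * (c * ψ (w + b * (s - x)) + b * deriv ψ (w + b * (s - x))) :=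
    funext fun s => ((hexp s).mul (hψ' s)).deriv.trans (by ring)
  rw [iteratedDeriv_succ, iteratedDeriv_one, hfirst]
  have hsecond : HasDerivAt
      (fun s : ℝ =>
        exp (c₀ + c * (s - x)) * (c * ψ (w + b * (s - x)) + b * deriv ψ (w + b * (s - x))))
      (exp c₀ * (c ^ 2 * ψ w + 2 * c * b * deriv ψ w + b ^ 2 * deriv (deriv ψ) w)) x := by
    have h := (hexp x).mul (((hψ' x).const_mul c).add ((hψ'' x).const_mul b))
    simp only [Pi.add_apply, sub_self, mul_zero, add_zero] at h
    exact h.congr_deriv (by ring)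
  exact hsecond.deriv

theorem hasDerivAt_gaussian (K a : ℂ) (r : ℝ) :
    HasDerivAt (fun r : ℝ => K * exp (-a * r ^ 2)) (-2 * a * r * (K * exp (-a * r ^ 2))) r := by
  have h := ((((hasDerivAt_pow 2 (r : ℂ)).comp_ofReal).const_mul (-a)).cexp).const_mul K
  exact h.congr_deriv (by push_cast; ring)

theorem gaussian_radial_laplacian (K a : ℂ) {ρ : ℝ} (hρ : ρ ≠ 0) :
    iteratedDeriv 2 (fun r : ℝ => K * exp (-a * r ^ 2)) ρ
        + ((1 / ρ : ℝ) : ℂ) * deriv (fun r : ℝ => K * exp (-a * r ^ 2)) ρ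
      = 4 * a * (a * ρ ^ 2 - 1) * (K * exp (-a * ρ ^ 2)) := by
  have hderiv : deriv (fun r : ℝ => K * exp (-a * r ^ 2))
      = fun r : ℝ => -2 * a * r * (K * exp (-a * r ^ 2)) :=
    funext fun r => (hasDerivAt_gaussian K a r).deriv
  have hsecond : HasDerivAt (fun r : ℝ => -2 * a * r * (K * exp (-a * r ^ 2)))
      (-2 * a * (K * exp (-a * ρ ^ 2)) + -2 * a * ρ * (-2 * a * ρ * (K * exp (-a * ρ ^ 2))))
      ρ :=
    ((hasDerivAt_id' (ρ : ℂ)).comp_ofReal.const_mul (-2 * a)).mul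
      (hasDerivAt_gaussian K a ρ) |>.congr_deriv (by ring)
  have hρ' : (ρ : ℂ) ≠ 0 := ofReal_ne_zero.mpr hρ
  rw [iteratedDeriv_succ, iteratedDeriv_one, hderiv, hsecond.deriv]
  push_cast
  field_simp
  ring

def profile (k w : ℂ) : ℂ := exp (-k / w) / w

theorem hasDerivAt_profile (k : ℂ) {w : ℂ} (hw : w ≠ 0) :
    HasDerivAt (profile k) (profile k w * (k / w ^ 2 - 1 / w)) w := by
  have h := ((hasDerivAt_const w (-k)).div (hasDerivAt_id' w) hw).cexp.div
    (hasDerivAt_id' w) hw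
  refine h.congr_deriv ?_
  simp only [profile, Pi.div_apply]
  field_simp
  ring

theorem differentiableOn_profile (k : ℂ) : DifferentiableOn ℂ (profile k) {w | w ≠ 0} :=
  fun _ hw => (hasDerivAt_profile k hw).differentiableAt.differentiableWithinAt

theorem add_mul_sub_ne_zero {w b : ℂ} (hw : 0 < w.re) (hb : b.re = 0) (x s : ℝ) :
    w + b * (s - x) ≠ 0 :=
  fun h => hw.ne' (by simpa [hb] using congrArg re h)

end FocusWaveMode

open FocusWaveMode in
theorem fwm_wave_equation_general (β z₀ : ℝ) (hz₀ : 0 < z₀) :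
    ∀ (t : ℝ) (ρ : ℝ) (z : ℝ), 0 < ρ →
      iteratedDeriv 2 (fun s => fwm β z₀ s ρ z) t
        = iteratedDeriv 2 (fun r => fwm β z₀ t r z) ρ
          + ((1 / ρ : ℝ) : ℂ) * deriv (fun r => fwm β z₀ t r z) ρ
          + iteratedDeriv 2 (fun w => fwm β z₀ t ρ w) z := by
  intro t ρ z hρ
  set E := exp (I * β * (z + t))
  set w : ℂ := z₀ + I * (z - t)
  set k : ℂ := ρ ^ 2 * β
  have hw : 0 < w.re := by simpa [w] using hz₀
  have hw0 : w ≠ 0 := fun h => by simp [h] at hw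
  have hfun_t : (fun s => fwm β z₀ s ρ z)
      = fun s : ℝ =>
        exp (I * β * (z + t) + I * β * (s - t)) * profile k (w + -I * (s - t)) := by
    funext s
    simp only [fwm, profile, w, k]
    push_cast
    ring_nf
  have hfun_z : (fun s => fwm β z₀ t ρ s)
      = fun s : ℝ =>
        exp (I * β * (z + t) + I * β * (s - z)) * profile k (w + I * (s - z)) := by
    funext s
    simp only [fwm, profile, w, k]
    push_cast
    ring_nf
  have hfun_ρ : (fun r => fwm β z₀ t r z) = fun r : ℝ => E / w * exp (-(β / w) * r ^ 2) := by
    funext r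
    simp only [fwm, E, w]
    push_cast
    ring_nf
  have hψ := differentiableOn_profile k
  rw [hfun_t, hfun_z, hfun_ρ, gaussian_radial_laplacian _ _ hρ.ne',
    iteratedDeriv_two_exp_mul_comp_affine isOpen_ne hψ _ _ _ _ _
      (add_mul_sub_ne_zero hw (by simp) t),
    iteratedDeriv_two_exp_mul_comp_affine isOpen_ne hψ _ _ _ _ _
      (add_mul_sub_ne_zero hw (by simp) z),
    (hasDerivAt_profile k hw0).deriv]
  have hgauss : -(β / w) * ρ ^ 2 = -k / w := by ring
  rw [hgauss]
  simp only [profile, E]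
  field_simp
  ring_nf
  simp only [I_sq]
  ring

/-- The focus wave mode satisfies the homogeneous wave equation in cylindrical
coordinates: `∂ₜ²Φ = ∂ρ²Φ + (1/ρ)∂ρΦ + ∂z²Φ` for all `t`, `ρ > 0`, `z`. -/
theorem fwm_wave_equation (β z₀ : ℝ) (hβ : 0 < β) (hz₀ : 0 < z₀) :
    ∀ (t : ℝ) (ρ : ℝ) (z : ℝ), 0 < ρ →
      iteratedDeriv 2 (fun s => fwm β z₀ s ρ z) t
        = iteratedDeriv 2 (fun r => fwm β z₀ t r z) ρ
          + ((1 / ρ : ℝ) : ℂ) * deriv (fun r => fwm β z₀ t r z) ρ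
          + iteratedDeriv 2 (fun w => fwm β z₀ t ρ w) z :=
  fwm_wave_equation_general β z₀ hz₀

end
end
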